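/- Let M be a loopfree matroid on the ground set E and let crem_E : ℝ^E/ℝ𝟙 → ℝ^E/ℝ𝟙 be the map induced by v_i ↦ −v_i for all i ∈ E. Then the image crem_E(B(M)) is the support of the Bergman fan B(M') of some matroid M' on E if and only if M is totally disconnected. -/

import Mathlib

open Set Function
open scoped Matroid Classical

namespace BergmanFans

variable {α β γ : Type*}

/-! ### Matroid notions -/

/-- A circuit of a matroid: a minimal dependent set. -/
def Circuit (M : Matroid α) (C : Set α) : Prop :=
  M.Dep C ∧ ∀ D, D ⊂ C → M.Indep D

/-- The rank of a subset: the largest cardinality of an independent subset. -/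
noncomputable def rkSet (M : Matroid α) (X : Set α) : ℕ :=
  sSup {n | ∃ I, I ⊆ X ∧ M.Indep I ∧ I.ncard = n}

/-- The rank of a matroid. -/
noncomputable def rk (M : Matroid α) : ℕ := rkSet M M.E

/-- A matroid is loopfree if every singleton of the ground set is independent. -/
def Loopfree (M : Matroid α) : Prop := ∀ i ∈ M.E, M.Indep {i}

/-- A matroid is simple if it has no loops and no parallel pairs. -/
def Simple (M : Matroid α) : Prop := ∀ i ∈ M.E, ∀ j ∈ M.E, M.Indep {i, j}

/-- Two elements are related if they are equal or lie on a common circuit. -/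
def ConnRel (M : Matroid α) (i j : α) : Prop :=
  i = j ∨ ∃ C, Circuit M C ∧ i ∈ C ∧ j ∈ C

/-- The connected component of an element. -/
def component (M : Matroid α) (i : α) : Set α := {j ∈ M.E | ConnRel M i j}

/-- A matroid is connected if all pairs of elements of the ground set lie on common
circuits. -/
def Connected (M : Matroid α) : Prop :=
  M.E.Nonempty ∧ ∀ i ∈ M.E, ∀ j ∈ M.E, ConnRel M i j

/-- A matroid is totally disconnected if every connected component has rank at most one. -/
def TotallyDisconnected (M : Matroid α) : Prop :=
  ∀ i ∈ M.E, rkSet M (component M i) ≤ 1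

/-- Contraction of a set, defined by duality. -/
noncomputable def contract (M : Matroid α) (C : Set α) : Matroid α := (M✶ ↾ (M.E \ C))✶

/-- A matroid isomorphism along a bijection of the underlying types. -/
def IsMatroidIso (M₁ : Matroid α) (M₂ : Matroid β) (f : α ≃ β) : Prop :=
  f '' M₁.E = M₂.E ∧ ∀ I, I ⊆ M₁.E → (M₁.Indep I ↔ M₂.Indep (f '' I))

/-- `M` is the parallel connection of `N₁` and `N₂` along `p`, described via circuits. -/
def IsParallelConnAt (M N₁ N₂ : Matroid γ) (p : γ) : Prop :=
  N₁.E ∪ N₂.E = M.E ∧ N₁.E ∩ N₂.E = {p} ∧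
  ∀ C, Circuit M C ↔ (Circuit N₁ C ∨ Circuit N₂ C ∨
    ∃ C₁ C₂, Circuit N₁ C₁ ∧ Circuit N₂ C₂ ∧ p ∈ C₁ ∧ p ∈ C₂ ∧ C = (C₁ ∪ C₂) \ {p})

/-- `M` is a non-trivial parallel connection along `p`. -/
def IsNontrivParallelConnAt (M : Matroid γ) (p : γ) : Prop :=
  ∃ N₁ N₂, IsParallelConnAt M N₁ N₂ p ∧ 2 ≤ rk N₁ ∧ 2 ≤ rk N₂

/-- `M` is a non-trivial parallel connection. -/
def IsNontrivParallelConn (M : Matroid γ) : Prop := ∃ p, IsNontrivParallelConnAt M p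

/-- `M` is the parallel connection of matroids `M₁`, `M₂` on other ground types, glued
along `p₁ ∈ E(M₁)` and `p₂ ∈ E(M₂)` via the injections `g₁`, `g₂`. -/
def IsParallelConnEmb (M : Matroid γ) (M₁ : Matroid α) (M₂ : Matroid β)
    (g₁ : α → γ) (g₂ : β → γ) (p₁ : α) (p₂ : β) : Prop :=
  Injective g₁ ∧ Injective g₂ ∧ range g₁ ∪ range g₂ = univ ∧
    range g₁ ∩ range g₂ = {g₁ p₁} ∧ g₁ p₁ = g₂ p₂ ∧
    ∀ C, Circuit M C ↔
      ((∃ C₁, Circuit M₁ C₁ ∧ C = g₁ '' C₁) ∨ (∃ C₂, Circuit M₂ C₂ ∧ C = g₂ '' C₂) ∨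
        (∃ C₁ C₂, Circuit M₁ C₁ ∧ Circuit M₂ C₂ ∧ p₁ ∈ C₁ ∧ p₂ ∈ C₂ ∧
          C = (g₁ '' C₁ ∪ g₂ '' C₂) \ {g₁ p₁}))

/-! ### The ambient space `ℝ^E/ℝ𝟙` and its lattice -/

variable (α) [Fintype α]

/-- The line `ℝ𝟙 ⊆ ℝ^E`. -/
noncomputable def lineSub : Submodule ℝ (α → ℝ) := Submodule.span ℝ {fun _ => (1 : ℝ)}

/-- The ambient space `ℝ^E/ℝ𝟙`. -/
abbrev Amb := (α → ℝ) ⧸ lineSub α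

/-- The quotient map `ℝ^E → ℝ^E/ℝ𝟙`. -/
noncomputable def proj : (α → ℝ) →ₗ[ℝ] Amb α := (lineSub α).mkQ

/-- The lattice `ℤ^E/ℤ𝟙` inside `ℝ^E/ℝ𝟙`. -/
noncomputable def intLatt : Set (Amb α) :=
  proj α '' {x | ∀ i, ∃ n : ℤ, x i = (n : ℝ)}

variable {α}

/-- The indicator vector `v_S ∈ ℝ^E` of a subset `S ⊆ E`. -/
noncomputable def indic (S : Set α) : α → ℝ := S.indicator 1

/-! ### Fans and their isomorphisms -/

variable {V W : Type*} [AddCommGroup V] [Module ℝ V] [AddCommGroup W] [Module ℝ W]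

/-- A linear map induced by an isomorphism of the lattices `LV`, `LW`. -/
def IsLatticeLinearIso (LV : Set V) (LW : Set W) (φ : V →ₗ[ℝ] W) : Prop :=
  Function.Bijective φ ∧ φ '' LV = LW

/-- `φ` is an isomorphism of the fans `S₁`, `S₂` (viewed as their collections of cones)
with respect to the lattices `LV`, `LW`: it is induced by a lattice isomorphism, maps cones
to cones, and its inverse maps cones to cones. -/
def IsFanIso (LV : Set V) (LW : Set W) (φ : V →ₗ[ℝ] W)
    (S₁ : Set (Set V)) (S₂ : Set (Set W)) : Prop :=
  IsLatticeLinearIso LV LW φ ∧ (∀ σ ∈ S₁, φ '' σ ∈ S₂) ∧ ∀ τ ∈ S₂, φ ⁻¹' τ ∈ S₁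

/-- The ray spanned by a vector. -/
def rayOf (u : V) : Set V := {x | ∃ t : ℝ, 0 ≤ t ∧ x = t • u}

/-- The product of two fans. -/
def prodFan (S₁ : Set (Set V)) (S₂ : Set (Set W)) : Set (Set (V × W)) :=
  {σ | ∃ σ₁ ∈ S₁, ∃ σ₂ ∈ S₂, σ = σ₁ ×ˢ σ₂}

/-! ### Bergman fans -/

/-- The affine Bergman fan: the set of `x` such that for every circuit `C` the minimum of
the values of `x` on `C` is attained at least twice. -/
def affBergman (M : Matroid α) : Set (α → ℝ) :=
  {x | ∀ C, Circuit M C → ∃ i ∈ C, ∃ j ∈ C, i ≠ j ∧ x i = x j ∧ ∀ k ∈ C, x i ≤ x k}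

/-- The projective Bergman fan `B(M) ⊆ ℝ^E/ℝ𝟙`, as a set. -/
noncomputable def projBergman (M : Matroid α) : Set (Amb α) := proj α '' affBergman M

/-- A proper nonempty flat. -/
def ProperFlat (M : Matroid α) (F : Set α) : Prop := M.IsFlat F ∧ F.Nonempty ∧ F ≠ M.E

/-- The cone spanned by the classes of the indicator vectors of a finite collection of
subsets of the ground set. -/
noncomputable def flagCone (𝒞 : Finset (Set α)) : Set (Amb α) :=
  {x | ∃ c : Set α → ℝ, (∀ F, 0 ≤ c F) ∧ x = ∑ F ∈ 𝒞, c F • proj α (indic F)}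

/-- The fine fan structure on the Bergman fan: cones are spanned by flags of proper
nonempty flats. -/
noncomputable def fineFan (M : Matroid α) : Set (Set (Amb α)) :=
  {σ | ∃ 𝒞 : Finset (Set α), IsChain (· ⊆ ·) (𝒞 : Set (Set α)) ∧
    (∀ F ∈ 𝒞, ProperFlat M F) ∧ σ = flagCone 𝒞}

/-- The `w`-weight of a subset. -/
noncomputable def wt (w : α → ℝ) (B : Set α) : ℝ := ∑ i, B.indicator w i

/-- The set of bases of `M` of minimal `w`-weight: the face of the matroid polytope
selected by `w`. -/
noncomputable def minBases (M : Matroid α) (w : α → ℝ) : Set (Set α) :=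
  {B | M.IsBase B ∧ ∀ B', M.IsBase B' → wt w B ≤ wt w B'}

/-- The closed normal cone of the face of the matroid polytope selected by `w₀`. -/
noncomputable def normalCone (M : Matroid α) (w₀ : α → ℝ) : Set (α → ℝ) :=
  {w | minBases M w₀ ⊆ minBases M w}

/-- The coarse fan structure on the Bergman fan: the cones of the normal fan of the
matroid polytope whose support lies in the Bergman fan. -/
noncomputable def coarseFan (M : Matroid α) : Set (Set (Amb α)) :=
  {σ | ∃ w₀ : α → ℝ, normalCone M w₀ ⊆ affBergman M ∧ σ = proj α '' normalCone M w₀}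

/-! ### Cremona maps -/

/-- The image of the basis vector `v_k` under the Cremona map of the basis `b`. -/
noncomputable def cremTarget (M : Matroid α) (b : Set α) (k : α) : α → ℝ :=
  if k ∈ b then indic (M.closure (b \ {k})) else indic {k}

/-- The affine Cremona map associated to a basis `b` of `M`: it sends `v_k ↦ v_{cl(b\k)}`
for `k ∈ b` and fixes `v_k` for `k ∉ b`. -/
noncomputable def cremAff (M : Matroid α) (b : Set α) : (α → ℝ) →ₗ[ℝ] (α → ℝ) where
  toFun x := ∑ k, x k • cremTarget M b k
  map_add' x y := by
    simp [add_smul, Finset.sum_add_distrib]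
  map_smul' c x := by
    simp [smul_smul, Finset.smul_sum]

end BergmanFans

/-! The map `x ↦ -x` sends the class of the indicator vector `v_S` to that of `v_{E \ S}`, and
`v_S ∈ B̃(M)` exactly when `S` is a flat of `M`. So if `-B(M) = B(M')`, the flats of `M'` are
the complements of the flats of `M`; as flats of `M'` are closed under intersection, flats of
`M` are closed under union, which forces every circuit of `M` to have two elements, i.e. `M`
is totally disconnected. Conversely, on a circuit `{i, j}` the tropical condition reads
`x i = x j`, so when all circuits are pairs `B(M)` is symmetric and `M' = M` works. -/

namespace BergmanFans

open Matroid

lemma _root_.Set.eq_pair_of_encard_le_two {α : Type*} {s : Set α} {a b : α}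
    (hs : s.encard ≤ 2) (ha : a ∈ s) (hb : b ∈ s) (hab : a ≠ b) : s = {a, b} :=
  ((toFinite {a, b}).eq_of_subset_of_encard_le (pair_subset ha hb)
    (by rwa [encard_pair hab])).symm

section Matroid

variable {α : Type*} {M : Matroid α} {C I X F₁ F₂ : Set α} {e : α}

lemma circuit_iff_isCircuit : Circuit M C ↔ M.IsCircuit C := by
  rw [isCircuit_iff_forall_ssubset]
  rfl

lemma Loopfree.loopless (hl : Loopfree M) : M.Loopless :=
  loopless_iff_forall_isNonloop.2 fun e he => indep_singleton.1 (hl e he)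

lemma _root_.Matroid.IsFlat.inter (h₁ : M.IsFlat F₁) (h₂ : M.IsFlat F₂) :
    M.IsFlat (F₁ ∩ F₂) := by
  refine isFlat_iff_closure_eq.2 (subset_antisymm (subset_inter ?_ ?_)
    (M.subset_closure _ (inter_subset_left.trans h₁.subset_ground)))
  · exact (M.closure_subset_closure inter_subset_left).trans h₁.closure.subset
  · exact (M.closure_subset_closure inter_subset_right).trans h₂.closure.subset

/-- For `a ≠ c` in `C`, the flat `cl {a} ∪ cl (C \ {a, c})` contains `C \ {c}`, hence `c`;
either way `C = {c, a}`. -/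
lemma _root_.Matroid.IsCircuit.encard_le_two_of_isFlat_union [M.Loopless]
    (hunion : ∀ F₁ F₂, M.IsFlat F₁ → M.IsFlat F₂ → M.IsFlat (F₁ ∪ F₂))
    (hC : M.IsCircuit C) : C.encard ≤ 2 := by
  obtain ⟨a, ha, c, hc, hac⟩ := loopless_iff_forall_isCircuit.1 ‹_› C hC
  suffices C = {c, a} by rw [this, encard_pair hac.symm]
  have hsub : C \ {c} ⊆ M.closure {a} ∪ M.closure (C \ {a, c}) := by
    rintro x ⟨hxC, hxc⟩
    by_cases hxa : x = a
    · exact Or.inl (hxa ▸ M.mem_closure_self a (hC.subset_ground ha))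
    · exact Or.inr (M.subset_closure _ (sdiff_subset.trans hC.subset_ground)
        ⟨hxC, by simp_all⟩)
  have hcl : c ∈ M.closure {a} ∪ M.closure (C \ {a, c}) :=
    (hunion _ _ (M.isFlat_closure _) (M.isFlat_closure _)).closure.subset
      (M.closure_subset_closure hsub (hC.mem_closure_sdiff_singleton_of_mem hc))
  rcases hcl with hca | hcC
  · have hdep : M.Dep {c, a} :=
      (isNonloop_of_loopless (hC.subset_ground ha)).indep.insert_dep_iff.2 ⟨hca, hac.symm⟩
    exact (hC.eq_of_dep_subset hdep (pair_subset hc ha)).symm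
  · have hind : M.Indep (C \ {a, c}) :=
      hC.ssubset_indep ((ssubset_iff_of_subset sdiff_subset).2 ⟨a, ha, by simp⟩)
    have hdep : M.Dep (insert c (C \ {a, c})) := hind.insert_dep_iff.2 ⟨hcC, by simp⟩
    have ha' := (hC.eq_of_dep_subset hdep (insert_subset hc sdiff_subset)).symm ▸ ha
    simp [hac] at ha'

lemma ncard_le_rkSet [Finite α] (hIX : I ⊆ X) (hI : M.Indep I) : I.ncard ≤ rkSet M X :=
  le_csSup ⟨Nat.card α, by rintro _ ⟨J, -, -, rfl⟩; exact ncard_le_card J⟩ ⟨I, hIX, hI, rfl⟩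

lemma rkSet_le_one_of_subset_closure_singleton (hX : X ⊆ M.closure {e}) : rkSet M X ≤ 1 := by
  refine csSup_le ⟨0, ∅, empty_subset _, M.empty_indep, ncard_empty _⟩ ?_
  rintro _ ⟨I, hIX, hI, rfl⟩
  have hI1 : I.encard ≤ 1 := calc
    I.encard ≤ M.eRk (M.closure {e}) := hI.encard_le_eRk_of_subset (hIX.trans hX)
    _ = M.eRk {e} := M.eRk_closure_eq _
    _ ≤ 1 := M.eRk_singleton_le e
  rw [← (finite_of_encard_le_coe hI1).cast_ncard_eq] at hI1
  exact_mod_cast hI1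

lemma TotallyDisconnected.encard_le_two [Finite α] [M.Loopless]
    (htd : TotallyDisconnected M) (hC : M.IsCircuit C) : C.encard ≤ 2 := by
  obtain ⟨a, ha, b, hb, hab⟩ := loopless_iff_forall_isCircuit.1 ‹_› C hC
  suffices C = {a, b} by rw [this, encard_pair hab]
  by_contra hne
  have hind : M.Indep {a, b} :=
    hC.ssubset_indep ((pair_subset ha hb).ssubset_of_ne (Ne.symm hne))
  have hcomp : {a, b} ⊆ component M a := pair_subset ⟨hC.subset_ground ha, Or.inl rfl⟩
    ⟨hC.subset_ground hb, Or.inr ⟨C, circuit_iff_isCircuit.2 hC, ha, hb⟩⟩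
  have h2 := (ncard_le_rkSet hcomp hind).trans (htd a (hC.subset_ground ha))
  rw [ncard_pair hab] at h2
  omega

lemma totallyDisconnected_of_forall_isCircuit_encard_le_two
    (h : ∀ C, M.IsCircuit C → C.encard ≤ 2) : TotallyDisconnected M := by
  refine fun i hi => rkSet_le_one_of_subset_closure_singleton (e := i) ?_
  rintro j ⟨-, rfl | ⟨C, hC, hiC, hjC⟩⟩
  · exact M.mem_closure_self i hi
  rcases eq_or_ne i j with rfl | hij
  · exact M.mem_closure_self i hi
  rw [circuit_iff_isCircuit] at hC
  have hj := hC.mem_closure_sdiff_singleton_of_mem hjC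
  rwa [eq_pair_of_encard_le_two (h C hC) hiC hjC hij, pair_sdiff_right hij] at hj

lemma totallyDisconnected_iff_forall_isCircuit_encard_le_two [Finite α] [M.Loopless] :
    TotallyDisconnected M ↔ ∀ C, M.IsCircuit C → C.encard ≤ 2 :=
  ⟨fun htd _ => htd.encard_le_two, totallyDisconnected_of_forall_isCircuit_encard_le_two⟩

end Matroid

section Bergman

variable {α : Type*} {M : Matroid α} {S : Set α} {x y : α → ℝ}

lemma indic_apply (S : Set α) (i : α) : indic S i = if i ∈ S then 1 else 0 := by
  simp [indic, Set.indicator_apply]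

lemma neg_mem_affBergman (h : ∀ C, M.IsCircuit C → C.encard ≤ 2) (hx : x ∈ affBergman M) :
    -x ∈ affBergman M := by
  intro C hC
  obtain ⟨i, hi, j, hj, hij, hxij, -⟩ := hx C hC
  refine ⟨i, hi, j, hj, hij, by simp [hxij], ?_⟩
  rw [eq_pair_of_encard_le_two (h C (circuit_iff_isCircuit.1 hC)) hi hj hij]
  rintro k (rfl | rfl) <;> simp [hxij]

lemma isFlat_of_indic_mem_affBergman (hS : S ⊆ M.E) (hx : indic S ∈ affBergman M) :
    M.IsFlat S := by
  refine isFlat_iff_closure_eq.2 ((M.subset_closure S hS).antisymm' fun e he => ?_)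
  by_contra heS
  obtain ⟨C, hCS, hC, heC⟩ := exists_isCircuit_of_mem_closure he heS
  obtain ⟨i, hi, j, hj, hij, hxij, hmin⟩ := hx C (circuit_iff_isCircuit.2 hC)
  have hmin_eq : ∀ k ∈ C, indic S k ≤ indic S e → k = e := by
    intro k hk hle
    rcases hCS hk with rfl | hkS
    · rfl
    · norm_num [indic_apply, hkS, heS] at hle
  exact hij ((hmin_eq i hi (hmin e heC)).trans (hmin_eq j hj (hxij ▸ hmin e heC)).symm)

/-- A flat cannot miss exactly one element `e` of a circuit `C`, since `e ∈ cl (C \ {e})`. -/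
lemma indic_mem_affBergman_of_isFlat [M.Loopless] (hS : M.IsFlat S) :
    indic S ∈ affBergman M := by
  intro C hC
  rw [circuit_iff_isCircuit] at hC
  by_cases hCS : C ⊆ S
  · obtain ⟨a, ha, b, hb, hab⟩ := loopless_iff_forall_isCircuit.1 ‹_› C hC
    exact ⟨a, ha, b, hb, hab, by simp [indic_apply, hCS ha, hCS hb],
      fun k hk => by simp [indic_apply, hCS ha, hCS hk]⟩
  obtain ⟨e, heC, heS⟩ := not_subset.1 hCS
  obtain ⟨f, hfC, hfS, hfe⟩ : ∃ f ∈ C, f ∉ S ∧ f ≠ e := by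
    by_contra! h
    refine heS (hS.closure.subset (M.closure_subset_closure ?_
      (hC.mem_closure_sdiff_singleton_of_mem heC)))
    rintro k ⟨hkC, hke⟩
    by_contra hkS
    exact hke (h k hkC hkS)
  refine ⟨e, heC, f, hfC, hfe.symm, by simp [indic_apply, heS, hfS], fun k _ => ?_⟩
  simp only [indic_apply, if_neg heS]
  split_ifs <;> norm_num

lemma indic_mem_affBergman_iff [M.Loopless] (hS : S ⊆ M.E) :
    indic S ∈ affBergman M ↔ M.IsFlat S :=
  ⟨isFlat_of_indic_mem_affBergman hS, indic_mem_affBergman_of_isFlat⟩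

lemma mem_affBergman_of_sub_mem_lineSub (hxy : x - y ∈ lineSub α) (hx : x ∈ affBergman M) :
    y ∈ affBergman M := by
  obtain ⟨c, hc⟩ := Submodule.mem_span_singleton.1 hxy
  have hy : ∀ k, y k = x k - c := fun k => by
    have := congrFun hc k
    simp only [Pi.smul_apply, smul_eq_mul, mul_one, Pi.sub_apply] at this
    linarith
  intro C hC
  obtain ⟨i, hi, j, hj, hij, hxij, hmin⟩ := hx C hC
  exact ⟨i, hi, j, hj, hij, by simp [hy, hxij], fun k hk => by simpa [hy] using hmin k hk⟩

lemma proj_mem_projBergman_iff : proj α x ∈ projBergman M ↔ x ∈ affBergman M :=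
  ⟨fun ⟨_, hy, hyx⟩ => mem_affBergman_of_sub_mem_lineSub ((Submodule.Quotient.eq _).1 hyx) hy,
    fun hx => ⟨x, hx, rfl⟩⟩

lemma neg_proj_indic (S : Set α) : -proj α (indic S) = proj α (indic Sᶜ) := by
  rw [← map_neg, proj, Submodule.mkQ_apply, Submodule.mkQ_apply, Submodule.Quotient.eq]
  refine Submodule.mem_span_singleton.2 ⟨-1, funext fun i => ?_⟩
  by_cases hi : i ∈ S <;> simp [indic_apply, hi]

lemma isFlat_iff_proj_indic_mem_projBergman [M.Loopless] (hE : M.E = univ) (S : Set α) :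
    M.IsFlat S ↔ proj α (indic S) ∈ projBergman M := by
  rw [proj_mem_projBergman_iff, indic_mem_affBergman_iff (hE ▸ subset_univ S)]

lemma isFlat_compl_iff_of_neg_image_eq {M' : Matroid α} [M.Loopless] [M'.Loopless]
    (hE : M.E = univ) (hE' : M'.E = univ)
    (himg : (fun x => -x) '' projBergman M = projBergman M') (S : Set α) :
    M'.IsFlat Sᶜ ↔ M.IsFlat S := by
  rw [isFlat_iff_proj_indic_mem_projBergman hE, isFlat_iff_proj_indic_mem_projBergman hE',
    ← himg, image_neg_eq_neg, Set.mem_neg, neg_proj_indic, compl_compl]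

lemma isFlat_union_of_neg_image_eq {M' : Matroid α} [M.Loopless] [M'.Loopless]
    (hE : M.E = univ) (hE' : M'.E = univ)
    (himg : (fun x => -x) '' projBergman M = projBergman M') {F₁ F₂ : Set α}
    (h₁ : M.IsFlat F₁) (h₂ : M.IsFlat F₂) : M.IsFlat (F₁ ∪ F₂) := by
  have hcompl := isFlat_compl_iff_of_neg_image_eq hE hE' himg
  rw [← hcompl, compl_union]
  exact ((hcompl F₁).2 h₁).inter ((hcompl F₂).2 h₂)

lemma neg_image_projBergman_eq_self (h : ∀ C, M.IsCircuit C → C.encard ≤ 2) :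
    (fun x => -x) '' projBergman M = projBergman M := by
  have hneg : ∀ z ∈ projBergman M, -z ∈ projBergman M := by
    rintro _ ⟨x, hx, rfl⟩
    exact ⟨-x, neg_mem_affBergman h hx, map_neg _ _⟩
  rw [image_neg_eq_neg]
  exact subset_antisymm (fun z hz => neg_neg z ▸ hneg _ hz) hneg

end Bergman

/-- The image of `B(M)` under the map induced by `v_i ↦ -v_i` is the
support of the Bergman fan of some matroid on `E` if and only if `M` is totally
disconnected. -/
theorem neg_image_bergman_iff_totally_disconnected
    {α : Type*} [Fintype α] (M : Matroid α) (hE : M.E = Set.univ) (hl : Loopfree M) :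
    (∃ M' : Matroid α, M'.E = Set.univ ∧ Loopfree M' ∧
      (fun x : Amb α => -x) '' projBergman M = projBergman M') ↔
      TotallyDisconnected M := by
  have := hl.loopless
  rw [totallyDisconnected_iff_forall_isCircuit_encard_le_two]
  constructor
  · rintro ⟨M', hE', hl', himg⟩
    have := hl'.loopless
    exact fun C hC => hC.encard_le_two_of_isFlat_union fun _ _ =>
      isFlat_union_of_neg_image_eq hE hE' himg
  · exact fun h => ⟨M, hE, hl, neg_image_projBergman_eq_self h⟩

end BergmanFans
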